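/- The pull-back by α²_M of the Liouville 1-form θ_{∧²TM} on T*(∧²TM) equals −d_T^2 θ²_M, and the pull-back by β²_M of the Liouville 1-form θ_{∧²T*M} on T*(∧²T*M) equals i_T^2 ω²_M, as 1-forms on ∧²T(∧²T*M). Consequently (α²_M)* ω_{∧²TM} = d_T^2 ω²_M = (β²_M)* ω_{∧²T*M}, where ω denotes the respective canonical symplectic forms. -/

import Mathlib

noncomputable section

/-- Coordinate model of vectors: functions on an index set. -/
abbrev Vec (ι : Type) := ι → ℝ

/-- Coordinate model of bivectors on `Vec ι`: (antisymmetric) matrices. -/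
abbrev Biv (ι : Type) := ι → ι → ℝ

/-- Antisymmetry of a bivector matrix. -/
def IsAnti {ι : Type} (u : Biv ι) : Prop := ∀ a b, u a b = - u b a

/-- Raw coordinate model of the exterior derivative of a `k`-form
(given as a function of a point and `k` tangent vectors). -/
def Dext {A : Type} [NormedAddCommGroup A] [NormedSpace ℝ A] {k : ℕ}
    (φ : A → (Fin k → A) → ℝ) : A → (Fin (k+1) → A) → ℝ :=
  fun x w => ∑ i : Fin (k+1), (-1 : ℝ)^(i : ℕ) *
    fderiv ℝ (fun y => φ y (fun j => w (i.succAbove j))) x (w i)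

/-- Pull-back of a raw `k`-form along a map. -/
def pullF {A B : Type} [NormedAddCommGroup A] [NormedSpace ℝ A]
    [NormedAddCommGroup B] [NormedSpace ℝ B] {k : ℕ}
    (f : A → B) (φ : B → (Fin k → B) → ℝ) : A → (Fin k → A) → ℝ :=
  fun x w => φ (f x) (fun i => fderiv ℝ f x (w i))

/-- The operator `i_T^2`: insertion of the bivector into the first two slots of a
`(k+2)`-form on the base, producing a semi-basic `k`-form on `∧²TN`
(modelled on `Vec ι × Biv ι`; only the base components of the arguments are used,
reflecting semi-basicity). -/
def iT2 {ι : Type} [Fintype ι] [DecidableEq ι] {k : ℕ}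
    (φ : Vec ι → (Fin (k+2) → Vec ι) → ℝ) :
    (Vec ι × Biv ι) → (Fin k → Vec ι × Biv ι) → ℝ :=
  fun p w => (1/2 : ℝ) * ∑ a, ∑ b, p.2 a b *
    φ p.1 (Matrix.vecCons (Pi.single a 1)
      (Matrix.vecCons (Pi.single b 1) (fun i => (w i).1)))

/-- The operator `d_T^2 = d ∘ i_T^2 − i_T^2 ∘ d` on `(k+2)`-forms, `k ≥ 0`. -/
def dT2 {ι : Type} [Fintype ι] [DecidableEq ι] {k : ℕ}
    (φ : Vec ι → (Fin (k+2) → Vec ι) → ℝ) :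
    (Vec ι × Biv ι) → (Fin (k+1) → Vec ι × Biv ι) → ℝ :=
  fun p w => Dext (iT2 φ) p w - iT2 (Dext φ) p w

/-- `i_T^2` on 1-forms lands in `(−1)`-forms, i.e. is zero. -/
def iT2one {ι : Type} (_φ : Vec ι → (Fin 1 → Vec ι) → ℝ) :
    (Vec ι × Biv ι) → ℝ := fun _ => 0

/-- `d_T^2` on 1-forms: `d ∘ i_T^2 − i_T^2 ∘ d = − i_T^2 ∘ d`. -/
def dT2one {ι : Type} [Fintype ι] [DecidableEq ι]
    (φ : Vec ι → (Fin 1 → Vec ι) → ℝ) : (Vec ι × Biv ι) → ℝ :=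
  fun p => - iT2 (Dext φ) p (fun i => i.elim0)

end

noncomputable section

/-- Pairing of covector components with tangent components:
`⟨(c₁, c₂), (v₁, v₂)⟩ = ∑ c₁ v₁ + (1/2) ∑ c₂ v₂`. -/
def covPair {ι : Type} [Fintype ι] (c : Vec ι × Biv ι) (v : Vec ι × Biv ι) : ℝ :=
  (∑ ρ, c.1 ρ * v.1 ρ) + (1/2 : ℝ) * ∑ l, ∑ k, c.2 l k * v.2 l k

/-- Antisymmetry constraints for a point/tangent datum of `∧²T(∧²T*M)`. -/
def GoodP {ι : Type} (z : Vec (ι ⊕ ι × ι) × Biv (ι ⊕ ι × ι)) : Prop :=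
  (∀ μ ν, z.1 (Sum.inr (μ, ν)) = - z.1 (Sum.inr (ν, μ))) ∧ IsAnti z.2 ∧
  (∀ i μ ν, z.2 i (Sum.inr (μ, ν)) = - z.2 i (Sum.inr (ν, μ)))

/-!
The 2-form `θ²_M` is linear in the base point. Hence `ω²_M = dθ²_M` has constant coefficients,
`dω²_M = 0` and `i_T²ω²_M` is linear on `∧²T(∧²T*M)`, while `i_T²θ²_M` is bilinear in the point
and the bivector; so every differential involved is that of a linear or bilinear map. Once the
antisymmetries of `p`, `y` and `ẋ` are used, both sides of each Liouville identity reduce to the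
same combination of the two contractions `p_{λκ} y^{λκ}` and `y^η_{ηρ} ẋ^ρ`. Since `α²_M` and
`β²_M` are linear, their pulled-back symplectic forms are the antisymmetrisations
`(w₁, w₂) ↦ λ(w₁)(w₂) - λ(w₂)(w₁)` of the pulled-back Liouville forms, and
`d_T²ω²_M = d(i_T²ω²_M)` is the antisymmetrisation of `i_T²ω²_M`.
-/

section Calculus

variable {E F : Type} [NormedAddCommGroup E] [NormedSpace ℝ E]
  [NormedAddCommGroup F] [NormedSpace ℝ F]

theorem IsLinearMap.hasFDerivAt [FiniteDimensional ℝ E] {f : E → F} (hf : IsLinearMap ℝ f)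
    (x : E) : HasFDerivAt f (LinearMap.toContinuousLinearMap (hf.mk' f)) x :=
  (LinearMap.toContinuousLinearMap (hf.mk' f)).hasFDerivAt

theorem IsLinearMap.fderiv_apply [FiniteDimensional ℝ E] {f : E → F} (hf : IsLinearMap ℝ f)
    (x v : E) : fderiv ℝ f x v = f v :=
  congrArg (· v) (hf.hasFDerivAt x).fderiv

theorem Dext_of_isLinearMap [FiniteDimensional ℝ E] {k : ℕ} {φ : E → (Fin k → E) → ℝ}
    (hφ : ∀ v, IsLinearMap ℝ (φ · v)) (x : E) (w : Fin (k + 1) → E) :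
    Dext φ x w = ∑ i : Fin (k + 1), (-1 : ℝ) ^ (i : ℕ) * φ (w i) (fun j => w (i.succAbove j)) := by
  simp only [Dext, (hφ _).fderiv_apply]

theorem Dext_eq_zero_of_forall_eq {k : ℕ} {φ : E → (Fin k → E) → ℝ}
    (hφ : ∀ x y v, φ x v = φ y v) : Dext φ = fun _ _ => 0 := by
  funext x w
  have hconst : ∀ v, (φ · v) = fun _ => φ 0 v := fun v => funext fun y => hφ y 0 v
  simp [Dext, hconst]

theorem Dext_apply_three [FiniteDimensional ℝ E] {φ : E → (Fin 2 → E) → ℝ}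
    (hφ : ∀ v, IsLinearMap ℝ (φ · v)) (x w₀ w₁ w₂ : E) :
    Dext φ x ![w₀, w₁, w₂] = φ w₀ ![w₁, w₂] - φ w₁ ![w₀, w₂] + φ w₂ ![w₀, w₁] := by
  have h₀ : (fun j => ![w₀, w₁, w₂] ((0 : Fin 3).succAbove j)) = ![w₁, w₂] := by
    funext j; fin_cases j <;> rfl
  have h₁ : (fun j => ![w₀, w₁, w₂] ((1 : Fin 3).succAbove j)) = ![w₀, w₂] := by
    funext j; fin_cases j <;> rfl
  have h₂ : (fun j => ![w₀, w₁, w₂] ((2 : Fin 3).succAbove j)) = ![w₀, w₁] := by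
    funext j; fin_cases j <;> rfl
  rw [Dext_of_isLinearMap hφ, Fin.sum_univ_three, h₀, h₁, h₂]
  norm_num [sub_eq_add_neg, Matrix.cons_val_two]

theorem Dext_apply_eq_of_isLinearMap [FiniteDimensional ℝ E] {k : ℕ} {φ : E → (Fin k → E) → ℝ}
    (hφ : ∀ v, IsLinearMap ℝ (φ · v)) (x y : E) (w : Fin (k + 1) → E) :
    Dext φ x w = Dext φ y w := by
  simp only [Dext_of_isLinearMap hφ]

theorem Dext_Dext_of_isLinearMap [FiniteDimensional ℝ E] {k : ℕ} {φ : E → (Fin k → E) → ℝ}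
    (hφ : ∀ v, IsLinearMap ℝ (φ · v)) : Dext (Dext φ) = fun _ _ => 0 :=
  Dext_eq_zero_of_forall_eq (Dext_apply_eq_of_isLinearMap hφ)

end Calculus

section InsertBivector

variable {ι : Type} [Fintype ι]

theorem sum_sum_mul_swap_of_isAnti {y : Biv ι} (hy : IsAnti y) (F : ι → ι → ℝ) :
    ∑ a, ∑ b, y a b * F b a = - ∑ a, ∑ b, y a b * F a b := by
  rw [Finset.sum_comm, ← Finset.sum_neg_distrib]
  refine Finset.sum_congr rfl fun a _ => ?_
  rw [← Finset.sum_neg_distrib]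
  refine Finset.sum_congr rfl fun b _ => ?_
  rw [hy]; ring

variable [DecidableEq ι]

theorem isLinearMap_iT2_of_forall_eq {k : ℕ} {φ : Vec ι → (Fin (k + 2) → Vec ι) → ℝ}
    (hφ : ∀ x y v, φ x v = φ y v) (v : Fin k → Vec ι × Biv ι) :
    IsLinearMap ℝ (iT2 φ · v) where
  map_add p q := by
    simp only [iT2, hφ _ 0, Prod.snd_add, Pi.add_apply, add_mul, Finset.sum_add_distrib, mul_add]
  map_smul c p := by
    simp only [iT2, hφ _ 0, Prod.smul_snd, Pi.smul_apply, smul_eq_mul, Finset.mul_sum]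
    ring_nf

theorem fderiv_iT2_of_isLinearMap {k : ℕ} {φ : Vec ι → (Fin (k + 2) → Vec ι) → ℝ}
    (hφ : ∀ v, IsLinearMap ℝ (φ · v)) (p w : Vec ι × Biv ι) (v : Fin k → Vec ι × Biv ι) :
    fderiv ℝ (iT2 φ · v) p w = iT2 φ (w.1, p.2) v + iT2 φ (p.1, w.2) v := by
  set c : ι → ι → Fin (k + 2) → Vec ι := fun a b =>
    Matrix.vecCons (Pi.single a 1) (Matrix.vecCons (Pi.single b 1) (fun i => (v i).1))
  have hbiv : ∀ a b, IsLinearMap ℝ (fun q : Vec ι × Biv ι => q.2 a b) := fun a b =>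
    ⟨fun _ _ => rfl, fun _ _ => rfl⟩
  have hbase : ∀ a b, IsLinearMap ℝ (fun q : Vec ι × Biv ι => φ q.1 (c a b)) := fun a b =>
    ⟨fun x y => (hφ _).map_add x.1 y.1, fun t x => (hφ _).map_smul t x.1⟩
  have hterm := fun a b => ((hbiv a b).hasFDerivAt p).mul ((hbase a b).hasFDerivAt p)
  have hsum := (HasFDerivAt.fun_sum (u := Finset.univ) fun a _ =>
    HasFDerivAt.fun_sum (u := Finset.univ) fun b _ => hterm a b).const_mul (1 / 2 : ℝ)
  rw [HasFDerivAt.fderiv (f := (iT2 φ · v)) hsum]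
  simp [iT2, c, Finset.sum_add_distrib, mul_comm]

theorem Dext_iT2_of_isLinearMap {k : ℕ} {φ : Vec ι → (Fin (k + 2) → Vec ι) → ℝ}
    (hφ : ∀ v, IsLinearMap ℝ (φ · v)) (p : Vec ι × Biv ι) (w : Fin (k + 1) → Vec ι × Biv ι) :
    Dext (iT2 φ) p w = ∑ i : Fin (k + 1), (-1 : ℝ) ^ (i : ℕ) *
      (iT2 φ ((w i).1, p.2) (fun j => w (i.succAbove j)) +
        iT2 φ (p.1, (w i).2) (fun j => w (i.succAbove j))) := by
  simp only [Dext, fderiv_iT2_of_isLinearMap hφ]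

theorem dT2_Dext_of_isLinearMap {k : ℕ} {φ : Vec ι → (Fin (k + 1) → Vec ι) → ℝ}
    (hφ : ∀ v, IsLinearMap ℝ (φ · v)) (p : Vec ι × Biv ι) (w : Fin (k + 1) → Vec ι × Biv ι) :
    dT2 (Dext φ) p w =
      ∑ i : Fin (k + 1), (-1 : ℝ) ^ (i : ℕ) * iT2 (Dext φ) (w i) (fun j => w (i.succAbove j)) := by
  simp [dT2, Dext_of_isLinearMap (isLinearMap_iT2_of_forall_eq (Dext_apply_eq_of_isLinearMap hφ)),
    Dext_Dext_of_isLinearMap hφ, iT2]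

theorem dT2_Dext_vecCons_two {φ : Vec ι → (Fin 2 → Vec ι) → ℝ}
    (hφ : ∀ v, IsLinearMap ℝ (φ · v)) (p w₁ w₂ : Vec ι × Biv ι) :
    dT2 (Dext φ) p (Matrix.vecCons w₁ (Matrix.vecCons w₂ fun i => i.elim0)) =
      iT2 (Dext φ) w₁ ![w₂] - iT2 (Dext φ) w₂ ![w₁] := by
  have h₀ : (fun j => Matrix.vecCons w₁ (Matrix.vecCons w₂ fun i => i.elim0)
      ((0 : Fin 2).succAbove j)) = ![w₂] := funext fun j => by fin_cases j; rfl
  have h₁ : (fun j => Matrix.vecCons w₁ (Matrix.vecCons w₂ fun i => i.elim0)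
      ((1 : Fin 2).succAbove j)) = ![w₁] := funext fun j => by fin_cases j; rfl
  rw [dT2_Dext_of_isLinearMap hφ, Fin.sum_univ_two, h₀, h₁]
  norm_num [sub_eq_add_neg]

theorem iT2_Dext_of_isLinearMap {φ : Vec ι → (Fin 2 → Vec ι) → ℝ}
    (hφ : ∀ v, IsLinearMap ℝ (φ · v)) (p : Vec ι × Biv ι) (hp : IsAnti p.2)
    (w : Vec ι × Biv ι) (v : Fin 0 → Vec ι × Biv ι) :
    iT2 (Dext φ) p (Matrix.vecCons w v) =
      ∑ a, ∑ b, p.2 a b * φ (Pi.single a 1) ![Pi.single b 1, w.1] + iT2 φ (w.1, p.2) v := by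
  have hw : (fun i => (Matrix.vecCons w v i).1) = ![w.1] := funext fun i => by fin_cases i; rfl
  -- the first two terms of `Dext φ _ ![e_a, e_b, w.1]` merge by antisymmetry of `p.2`
  have hswap := sum_sum_mul_swap_of_isAnti hp fun a b => φ (Pi.single a 1) ![Pi.single b 1, w.1]
  simp only [iT2]
  rw [hw]
  simp only [Matrix.empty_eq, Dext_apply_three hφ, mul_add, mul_sub,
    Finset.sum_add_distrib, Finset.sum_sub_distrib, hswap]
  ring

end InsertBivector

section Coordinates

variable {ι : Type} [Fintype ι]

def theta2 : Vec (ι ⊕ ι × ι) → (Fin 2 → Vec (ι ⊕ ι × ι)) → ℝ :=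
  fun b w => (1/2 : ℝ) * ∑ μ, ∑ ν, b (Sum.inr (μ, ν)) *
    (w 0 (Sum.inl μ) * w 1 (Sum.inl ν) - w 1 (Sum.inl μ) * w 0 (Sum.inl ν))

def alpha2 (z : Vec (ι ⊕ ι × ι) × Biv (ι ⊕ ι × ι)) : (Vec ι × Biv ι) × (Vec ι × Biv ι) :=
  ((z.1 ∘ Sum.inl, fun μ ν => z.2 (Sum.inl μ) (Sum.inl ν)),
    ((fun ρ => - ∑ η, z.2 (Sum.inl η) (Sum.inr (η, ρ))), (fun l k => - z.1 (Sum.inr (l, k)))))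

def beta2 (z : Vec (ι ⊕ ι × ι) × Biv (ι ⊕ ι × ι)) : (Vec ι × Biv ι) × (Vec ι × Biv ι) :=
  ((z.1 ∘ Sum.inl, fun l k => z.1 (Sum.inr (l, k))),
    ((fun ρ => - ∑ η, z.2 (Sum.inl η) (Sum.inr (η, ρ))), (fun μ ν => z.2 (Sum.inl μ) (Sum.inl ν))))

/-- In the coordinates `(x^μ, p_{μν})` of `∧²T*M`, `(y^{ab})` of the bivector and `(ẋ^μ, ṗ_{μν})` of
a tangent vector: `momentumPairing x y = p_{λκ} y^{λκ}` and `traceContraction y ẋ = y^η_{ηρ} ẋ^ρ`. -/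
def momentumPairing (x : Vec (ι ⊕ ι × ι)) (y : Biv (ι ⊕ ι × ι)) : ℝ :=
  ∑ l, ∑ k, x (Sum.inr (l, k)) * y (Sum.inl l) (Sum.inl k)

def traceContraction (y : Biv (ι ⊕ ι × ι)) (u : Vec (ι ⊕ ι × ι)) : ℝ :=
  ∑ ρ, ∑ η, y (Sum.inl η) (Sum.inr (η, ρ)) * u (Sum.inl ρ)

theorem isLinearMap_theta2 (v : Fin 2 → Vec (ι ⊕ ι × ι)) : IsLinearMap ℝ (theta2 · v) where
  map_add x y := by simp only [theta2, Pi.add_apply, add_mul, Finset.sum_add_distrib, mul_add]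
  map_smul c x := by simp only [theta2, Pi.smul_apply, smul_eq_mul, Finset.mul_sum]; ring_nf

theorem isLinearMap_alpha2 : IsLinearMap ℝ (alpha2 (ι := ι)) where
  map_add z w := by
    ext <;> simp [alpha2, Finset.sum_add_distrib, add_comm]
  map_smul c z := by
    ext <;> simp [alpha2, Finset.mul_sum]

theorem isLinearMap_beta2 : IsLinearMap ℝ (beta2 (ι := ι)) where
  map_add z w := by
    ext <;> simp [beta2, Finset.sum_add_distrib, add_comm]
  map_smul c z := by
    ext <;> simp [beta2, Finset.mul_sum]

theorem covPair_alpha2 (z w : Vec (ι ⊕ ι × ι) × Biv (ι ⊕ ι × ι)) :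
    covPair (alpha2 z).2 (alpha2 w).1 =
      - traceContraction z.2 w.1 - (1/2) * momentumPairing z.1 w.2 := by
  simp only [covPair, alpha2, traceContraction, momentumPairing, Function.comp_apply, neg_mul,
    mul_neg, Finset.sum_mul, Finset.sum_neg_distrib]
  ring

theorem covPair_beta2 (z w : Vec (ι ⊕ ι × ι) × Biv (ι ⊕ ι × ι)) :
    covPair (beta2 z).2 (beta2 w).1 =
      (1/2) * momentumPairing w.1 z.2 - traceContraction z.2 w.1 := by
  simp only [covPair, beta2, traceContraction, momentumPairing, Function.comp_apply, neg_mul,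
    Finset.sum_neg_distrib, Finset.sum_mul, mul_comm (z.2 _ _) (w.1 _)]
  ring

variable [DecidableEq ι]

theorem iT2_theta2 (x : Vec (ι ⊕ ι × ι)) (y : Biv (ι ⊕ ι × ι))
    (hx : ∀ μ ν, x (Sum.inr (μ, ν)) = - x (Sum.inr (ν, μ)))
    (v : Fin 0 → Vec (ι ⊕ ι × ι) × Biv (ι ⊕ ι × ι)) :
    iT2 theta2 (x, y) v = (1/2) * momentumPairing x y := by
  have hcontract : iT2 theta2 (x, y) v = (1/2) * ∑ μ, ∑ ν,
      y (Sum.inl μ) (Sum.inl ν) * ((1/2) * (x (Sum.inr (μ, ν)) - x (Sum.inr (ν, μ)))) := by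
    simp [iT2, theta2, Fintype.sum_sum_type, Pi.single_apply, Finset.mul_sum, mul_sub,
      Finset.sum_sub_distrib, ← mul_assoc]
  rw [hcontract, momentumPairing]
  congr 1
  refine Finset.sum_congr rfl fun μ _ => Finset.sum_congr rfl fun ν _ => ?_
  rw [hx ν μ]
  ring

theorem sum_sum_mul_theta2_single (y : Biv (ι ⊕ ι × ι)) (hy : IsAnti y)
    (hy' : ∀ i μ ν, y i (Sum.inr (μ, ν)) = - y i (Sum.inr (ν, μ))) (u : Vec (ι ⊕ ι × ι)) :
    ∑ a, ∑ b, y a b * theta2 (Pi.single a 1) ![Pi.single b 1, u] = - traceContraction y u := by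
  have hexpand : ∑ a, ∑ b, y a b * theta2 (Pi.single a 1) ![Pi.single b 1, u] = (1/2) *
      (∑ μ, ∑ ν, y (Sum.inr (μ, ν)) (Sum.inl μ) * u (Sum.inl ν) -
        ∑ μ, ∑ ν, y (Sum.inr (μ, ν)) (Sum.inl ν) * u (Sum.inl μ)) := by
    simp [theta2, Fintype.sum_sum_type, Fintype.sum_prod_type, Pi.single_apply, Finset.mul_sum,
      mul_sub, ite_and, Finset.sum_sub_distrib, mul_left_comm]
  have h₁ : ∑ μ, ∑ ν, y (Sum.inr (μ, ν)) (Sum.inl μ) * u (Sum.inl ν) = - traceContraction y u := by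
    rw [traceContraction, Finset.sum_comm, ← Finset.sum_neg_distrib]
    refine Finset.sum_congr rfl fun μ _ => ?_
    rw [← Finset.sum_neg_distrib]
    refine Finset.sum_congr rfl fun ν _ => ?_
    rw [hy]
    ring
  have h₂ : ∑ μ, ∑ ν, y (Sum.inr (μ, ν)) (Sum.inl ν) * u (Sum.inl μ) = traceContraction y u := by
    refine Finset.sum_congr rfl fun μ _ => Finset.sum_congr rfl fun ν _ => ?_
    rw [hy, hy']
    ring
  rw [hexpand, h₁, h₂]
  ring

theorem iT2_Dext_theta2 (z : Vec (ι ⊕ ι × ι) × Biv (ι ⊕ ι × ι)) (hz : GoodP z)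
    (w : Vec (ι ⊕ ι × ι) × Biv (ι ⊕ ι × ι))
    (hw : ∀ μ ν, w.1 (Sum.inr (μ, ν)) = - w.1 (Sum.inr (ν, μ)))
    (v : Fin 0 → Vec (ι ⊕ ι × ι) × Biv (ι ⊕ ι × ι)) :
    iT2 (Dext theta2) z (Matrix.vecCons w v) =
      (1/2) * momentumPairing w.1 z.2 - traceContraction z.2 w.1 := by
  rw [iT2_Dext_of_isLinearMap isLinearMap_theta2 z hz.2.1,
    sum_sum_mul_theta2_single z.2 hz.2.1 hz.2.2, iT2_theta2 _ _ hw]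
  ring

theorem dT2_theta2 (z : Vec (ι ⊕ ι × ι) × Biv (ι ⊕ ι × ι)) (hz : GoodP z)
    (w : Vec (ι ⊕ ι × ι) × Biv (ι ⊕ ι × ι))
    (hw : ∀ μ ν, w.1 (Sum.inr (μ, ν)) = - w.1 (Sum.inr (ν, μ)))
    (v : Fin 0 → Vec (ι ⊕ ι × ι) × Biv (ι ⊕ ι × ι)) :
    dT2 theta2 z (Matrix.vecCons w v) =
      (1/2) * momentumPairing z.1 w.2 + traceContraction z.2 w.1 := by
  rw [dT2, Dext_iT2_of_isLinearMap isLinearMap_theta2, Fin.sum_univ_one, iT2_Dext_theta2 z hz w hw]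
  simp only [Fin.val_zero, pow_zero, one_mul, Matrix.cons_val_zero]
  rw [iT2_theta2 _ _ hw, iT2_theta2 _ _ hz.1]
  ring

end Coordinates

theorem alpha_beta_pullback_liouville {ι : Type} [Fintype ι] [DecidableEq ι]
    (θ : Vec (ι ⊕ ι × ι) → (Fin 2 → Vec (ι ⊕ ι × ι)) → ℝ)
    (hθ : θ = fun b w => (1/2 : ℝ) * ∑ μ, ∑ ν, b (Sum.inr (μ, ν)) *
      (w 0 (Sum.inl μ) * w 1 (Sum.inl ν) - w 1 (Sum.inl μ) * w 0 (Sum.inl ν)))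
    (A B : (Vec (ι ⊕ ι × ι) × Biv (ι ⊕ ι × ι)) → (Vec ι × Biv ι) × (Vec ι × Biv ι))
    (hA : A = fun z => ((z.1 ∘ Sum.inl, fun μ ν => z.2 (Sum.inl μ) (Sum.inl ν)),
      ((fun ρ => - ∑ η, z.2 (Sum.inl η) (Sum.inr (η, ρ))),
       (fun l k => - z.1 (Sum.inr (l, k))))))
    (hB : B = fun z => ((z.1 ∘ Sum.inl, fun l k => z.1 (Sum.inr (l, k))),
      ((fun ρ => - ∑ η, z.2 (Sum.inl η) (Sum.inr (η, ρ))),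
       (fun μ ν => z.2 (Sum.inl μ) (Sum.inl ν)))))
    (z : Vec (ι ⊕ ι × ι) × Biv (ι ⊕ ι × ι)) (hz : GoodP z) :
    -- `(α²_M)* θ_{∧²TM} = − d_T^2 θ²_M`:
    (∀ w, GoodP w →
      covPair (A z).2 (fderiv ℝ A z w).1 =
        - dT2 θ z (Matrix.vecCons w (fun i => i.elim0))) ∧
    -- `(β²_M)* θ_{∧²T*M} = i_T^2 ω²_M` (`ω²_M = dθ²_M`):
    (∀ w, GoodP w →
      covPair (B z).2 (fderiv ℝ B z w).1 =
        iT2 (Dext θ) z (Matrix.vecCons w (fun i => i.elim0))) ∧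
    -- consequently `(α²_M)* ω_{∧²TM} = d_T^2 ω²_M = (β²_M)* ω_{∧²T*M}`:
    (∀ w1 w2, GoodP w1 → GoodP w2 →
      covPair (fderiv ℝ A z w1).2 (fderiv ℝ A z w2).1
          - covPair (fderiv ℝ A z w2).2 (fderiv ℝ A z w1).1 =
        dT2 (Dext θ) z (Matrix.vecCons w1 (Matrix.vecCons w2 (fun i => i.elim0))) ∧
      covPair (fderiv ℝ B z w1).2 (fderiv ℝ B z w2).1
          - covPair (fderiv ℝ B z w2).2 (fderiv ℝ B z w1).1 =
        dT2 (Dext θ) z (Matrix.vecCons w1 (Matrix.vecCons w2 (fun i => i.elim0)))) := by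
  obtain rfl : θ = theta2 := hθ
  obtain rfl : A = alpha2 := hA
  obtain rfl : B = beta2 := hB
  simp only [(isLinearMap_alpha2 (ι := ι)).fderiv_apply, (isLinearMap_beta2 (ι := ι)).fderiv_apply]
  refine ⟨fun w hw => ?_, fun w hw => ?_, fun w₁ w₂ hw₁ hw₂ => ?_⟩
  · rw [covPair_alpha2, dT2_theta2 z hz w hw.1]
    ring
  · rw [covPair_beta2, iT2_Dext_theta2 z hz w hw.1]
  · rw [dT2_Dext_vecCons_two isLinearMap_theta2, iT2_Dext_theta2 w₁ hw₁ w₂ hw₂.1,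
      iT2_Dext_theta2 w₂ hw₂ w₁ hw₁.1, covPair_alpha2, covPair_alpha2, covPair_beta2,
      covPair_beta2]
    constructor <;> ring
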